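/- arXiv:1803.08350 — 2 statements merged into one kernel-verified Lean document; each statement's English description precedes it below -/
import Mathlib

section
/- For every integer k ≥ 1, the following identity holds in the ring of formal power series ℚ[[t]]: t^{2k−1} · ( (1 − t²)⁻¹ + t^{4k−2} · (1 − t^{4k−2})⁻¹ ) = ∑_{q=0}^∞ b'_q t^q, where (b'_q) is the sequence defined in the context. (This is the computation of the Betti numbers of the quotient of the free loop space pair of an even-dimensional sphere S^{2k}: b'_q = rank H_q(Λ̄S^n, Λ̄⁰S^n) with n = 2k.) -/
/-- The Betti numbers `b'_q = rank H_q(Λ̄S^n, Λ̄⁰S^n)` of the free loop space pair of an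
even-dimensional sphere `S^{2k}`: `b'_{2k-1} = 1`; for `q = (2k-1) + 2l` with `l ≥ 1`,
`b'_q = 2` if `(2k-1) ∣ l` and `b'_q = 1` otherwise; `b'_q = 0` in all other cases. -/
def evenSphereBetti (k q : ℕ) : ℕ :=
  if q = 2 * k - 1 then 1
  else if 2 * k - 1 < q ∧ (q - (2 * k - 1)) % 2 = 0 then
    (if (2 * k - 1) ∣ (q - (2 * k - 1)) / 2 then 2 else 1)
  else 0

open PowerSeries

lemma geom_inv (n : ℕ) (hn : 1 ≤ n) :
    ((1 - X ^ n : PowerSeries ℚ))⁻¹ =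
      PowerSeries.mk fun q => if n ∣ q then (1 : ℚ) else 0 := by
  rw [PowerSeries.inv_eq_iff_mul_eq_one]
  · ext q
    rw [mul_sub, mul_one, map_sub]
    simp only [PowerSeries.coeff_mk, PowerSeries.coeff_mul_X_pow', PowerSeries.coeff_one]
    rcases eq_or_ne q 0 with rfl | hq
    · have : ¬ n ≤ 0 := by omega
      simp [this]
    · by_cases hd : n ∣ q
      · have h1 : n ≤ q := Nat.le_of_dvd (Nat.pos_of_ne_zero hq) hd
        have h2 : n ∣ q - n := Nat.dvd_sub hd dvd_rfl
        simp [hd, h1, h2, hq]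
      · have h2 : ∀ _ : n ≤ q, ¬ n ∣ q - n := by
          intro hle h
          have h3 := Nat.dvd_add h (dvd_refl n)
          rw [Nat.sub_add_cancel hle] at h3
          exact hd h3
        by_cases hle : n ≤ q
        · simp [hd, hle, h2 hle, hq]
        · simp [hd, hle, hq]
  · simp [map_pow, zero_pow (by omega : n ≠ 0)]

lemma betti_eq (k q : ℕ) (hk : 1 ≤ k) :
    evenSphereBetti k q =
      if 2 * k - 1 ≤ q then
        (if 2 ∣ q - (2 * k - 1) then 1 else 0) +
          (if 4 * k - 2 ≤ q - (2 * k - 1) then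
            (if 4 * k - 2 ∣ q - (2 * k - 1) - (4 * k - 2) then 1 else 0) else 0)
      else 0 := by
  rcases lt_or_ge q (2 * k - 1) with hlt | hle
  · rw [if_neg (by omega)]
    unfold evenSphereBetti
    rw [if_neg (by omega), if_neg (by omega)]
  · rw [if_pos hle]
    obtain ⟨r, rfl⟩ : ∃ r, q = (2 * k - 1) + r := ⟨q - (2 * k - 1), by omega⟩
    have hsub : (2 * k - 1) + r - (2 * k - 1) = r := by omega
    unfold evenSphereBetti
    rw [hsub]
    have h2m : 4 * k - 2 = 2 * (2 * k - 1) := by omega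
    rcases Nat.eq_zero_or_pos r with rfl | hrpos
    · rw [if_pos (by omega), if_pos (dvd_zero 2), if_neg (by omega : ¬ 4 * k - 2 ≤ 0)]
    · rw [if_neg (by omega)]
      by_cases hev : 2 ∣ r
      · rw [if_pos ⟨by omega, by omega⟩, if_pos hev]
        obtain ⟨s, rfl⟩ := hev
        have hhalf : 2 * s / 2 = s := by omega
        have hdiv : (2 * k - 1) ∣ 2 * s / 2 ↔ (4 * k - 2) ∣ 2 * s := by
          rw [hhalf, h2m]
          exact (mul_dvd_mul_iff_left (two_ne_zero)).symm
        by_cases hd : (2 * k - 1) ∣ 2 * s / 2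
        · have hD : (4 * k - 2) ∣ 2 * s := hdiv.mp hd
          have hle2 : 4 * k - 2 ≤ 2 * s := Nat.le_of_dvd (by omega) hD
          rw [if_pos hd, if_pos hle2, if_pos (Nat.dvd_sub hD dvd_rfl)]
        · rw [if_neg hd]
          have hND : ¬ (4 * k - 2) ∣ 2 * s := fun h => hd (hdiv.mpr h)
          by_cases hle2 : 4 * k - 2 ≤ 2 * s
          · rw [if_pos hle2, if_neg]
            intro h
            have h3 := Nat.dvd_add h (dvd_refl (4 * k - 2))
            rw [Nat.sub_add_cancel hle2] at h3
            exact hND h3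
          · rw [if_neg hle2]
      · rw [if_neg (by omega), if_neg hev]
        by_cases hle2 : 4 * k - 2 ≤ r
        · rw [if_pos hle2, if_neg]
          intro h
          have h2 : (2 : ℕ) ∣ (4 * k - 2) := ⟨2 * k - 1, by omega⟩
          have h3 := h2.trans h
          omega
        · rw [if_neg hle2]

theorem even_sphere_betti_generating_series (k : ℕ) (hk : 1 ≤ k) :
    (X : PowerSeries ℚ) ^ (2 * k - 1) *
        ((1 - X ^ 2)⁻¹ + X ^ (4 * k - 2) * (1 - X ^ (4 * k - 2))⁻¹) =
      PowerSeries.mk fun q => (evenSphereBetti k q : ℚ) := by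
  rw [geom_inv 2 (by omega), geom_inv (4 * k - 2) (by omega)]
  ext q
  simp only [PowerSeries.coeff_mk, PowerSeries.coeff_X_pow_mul', map_add]
  rw [betti_eq k q hk]
  split_ifs <;> norm_num
end

section
/- Let h ≥ 1 be an integer and v ∈ ℝ^h. Let H be the closure in the torus T^h = (ℝ/ℤ)^h of { π(m·v) : m ∈ ℕ, m ≥ 1 }, let G = π^{−1}(H) ⊆ ℝ^h, and let V = { x ∈ ℝ^h : t·x ∈ G for all t ∈ ℝ } (the tangent space at the origin of π^{−1}H, i.e. the maximal linear subspace contained in the closed subgroup G). Define A(v) = { x ∈ V : x_k ≠ 0 for every index k with v_k irrational }, and define ψ : ℝ → {0,1} by ψ(x) = 0 if x ≥ 0 and ψ(x) = 1 if x < 0. Then for every a = (a_1, …, a_h) ∈ A(v) and every ε > 0, there exist infinitely many T ∈ ℕ such that |{T v_k} − ψ(a_k)| < ε for every k = 1, …, h, where {x} ∈ [0,1) denotes the fractional part of x. -/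
/-- The canonical projection `ℝ^h → T^h = (ℝ/ℤ)^h`. -/
noncomputable def torusProj (h : ℕ) (x : Fin h → ℝ) : Fin h → AddCircle (1 : ℝ) :=
  fun i => (x i : AddCircle (1 : ℝ))

/-- `H`: the closure in `T^h` of the projections of the positive multiples of `v`. -/
def multClosure (h : ℕ) (v : Fin h → ℝ) : Set (Fin h → AddCircle (1 : ℝ)) :=
  closure { x | ∃ m : ℕ, 1 ≤ m ∧ x = torusProj h (fun i => (m : ℝ) * v i) }

/-- `V`: the maximal linear subspace contained in `G = π⁻¹ H`, i.e. the tangent space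
at the origin of `π⁻¹ H`. -/
def tangentSet (h : ℕ) (v : Fin h → ℝ) : Set (Fin h → ℝ) :=
  { x | ∀ t : ℝ, torusProj h (t • x) ∈ multClosure h v }

/-- `A(v)`: the set obtained from `V` by deleting, for each coordinate `k` with `v k`
irrational, the hyperplane `{x ∈ V | x k = 0}`. -/
def admissibleSet (h : ℕ) (v : Fin h → ℝ) : Set (Fin h → ℝ) :=
  { x ∈ tangentSet h v | ∀ k, Irrational (v k) → x k ≠ 0 }

/-- `ψ(x) = 0` if `x ≥ 0` and `ψ(x) = 1` if `x < 0`. -/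
noncomputable def psiFn (x : ℝ) : ℝ := if 0 ≤ x then 0 else 1

/-- The norm on `AddCircle 1` of the class of `x` is the distance to the nearest integer. -/
lemma LZ.norm_coe_one (x : ℝ) : ‖(x : AddCircle (1:ℝ))‖ = |x - round x| := by
  rw [AddCircle.norm_eq]; norm_num

lemma LZ.norm_coe_le_abs (x : ℝ) : ‖(x : AddCircle (1:ℝ))‖ ≤ |x| := by
  rw [LZ.norm_coe_one]
  simpa using round_le x 0

lemma LZ.coe_eq_coe_of_sub_int (x y : ℝ) (n : ℤ) (hxy : x - y = n) :
    (x : AddCircle (1:ℝ)) = (y : AddCircle (1:ℝ)) := by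
  have h0 : ((x - y : ℝ) : AddCircle (1:ℝ)) = 0 := by
    rw [AddCircle.coe_eq_zero_iff]
    exact ⟨n, by simp [hxy]⟩
  rw [AddCircle.coe_sub, sub_eq_zero] at h0
  exact h0

/-- Simultaneous recurrence to `0` on the torus, by pigeonhole. -/
lemma LZ.recurrence (h : ℕ) (w : Fin h → ℝ) {η : ℝ} (hη : 0 < η) :
    ∃ r : ℕ, 1 ≤ r ∧ ∀ k, ‖(((r:ℝ) * w k : ℝ) : AddCircle (1:ℝ))‖ < η := by
  obtain ⟨B, hB⟩ := exists_nat_gt (1/η)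
  have hB0 : (0:ℝ) < B := lt_trans (by positivity) hB
  have hfr : ∀ (j : ℕ) (k : Fin h), Int.fract ((j:ℝ) * w k) * B < B := by
    intro j k
    have := Int.fract_lt_one ((j:ℝ) * w k)
    nlinarith [Int.fract_nonneg ((j:ℝ) * w k)]
  have hnn : ∀ (j : ℕ) (k : Fin h), (0:ℝ) ≤ Int.fract ((j:ℝ) * w k) * B := by
    intro j k
    exact mul_nonneg (Int.fract_nonneg _) hB0.le
  set F : ℕ → (Fin h → Fin B) := fun j k =>
    ⟨⌊Int.fract ((j:ℝ) * w k) * B⌋₊, (Nat.floor_lt (hnn j k)).mpr (hfr j k)⟩ with hF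
  obtain ⟨j, j', hne, heq⟩ := Finite.exists_ne_map_eq_of_infinite F
  wlog hlt : j < j' generalizing j j'
  · exact this j' j hne.symm heq.symm (by omega)
  refine ⟨j' - j, by omega, fun k => ?_⟩
  have hfl : ⌊Int.fract ((j:ℝ) * w k) * B⌋₊ = ⌊Int.fract ((j':ℝ) * w k) * B⌋₊ := by
    have := congrFun heq k
    simpa [hF] using congrArg Fin.val this
  have hclose : |Int.fract ((j':ℝ) * w k) - Int.fract ((j:ℝ) * w k)| < 1 / B := by
    have h1 := Nat.lt_floor_add_one (Int.fract ((j:ℝ) * w k) * B)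
    have h2 := Nat.lt_floor_add_one (Int.fract ((j':ℝ) * w k) * B)
    have h3 := Nat.floor_le (hnn j k)
    have h4 := Nat.floor_le (hnn j' k)
    rw [hfl] at h1 h3
    have e1 : (Int.fract ((j':ℝ) * w k) - Int.fract ((j:ℝ) * w k)) * B < 1 := by
      rw [sub_mul]; linarith
    have e2 : (Int.fract ((j:ℝ) * w k) - Int.fract ((j':ℝ) * w k)) * B < 1 := by
      rw [sub_mul]; linarith
    rw [abs_lt]
    refine ⟨?_, (lt_div_iff₀ hB0).mpr e1⟩
    have := (lt_div_iff₀ hB0).mpr e2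
    linarith
  have hcoe : ((((j' - j : ℕ):ℝ) * w k : ℝ) : AddCircle (1:ℝ))
      = ((Int.fract ((j':ℝ) * w k) - Int.fract ((j:ℝ) * w k) : ℝ) : AddCircle (1:ℝ)) := by
    apply LZ.coe_eq_coe_of_sub_int _ _ (⌊((j':ℝ) * w k)⌋ - ⌊((j:ℝ) * w k)⌋)
    have hjj : ((j' - j : ℕ):ℝ) = (j':ℝ) - j := by
      push_cast [Nat.cast_sub hlt.le]; ring
    simp only [Int.fract, hjj]
    push_cast
    ring
  rw [hcoe]
  calc ‖_‖ ≤ |Int.fract ((j':ℝ) * w k) - Int.fract ((j:ℝ) * w k)| := LZ.norm_coe_le_abs _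
    _ < 1 / B := hclose
    _ < η := by
        rw [div_lt_iff₀ hB0]
        rw [div_lt_iff₀ hη] at hB
        linarith [mul_comm η (B:ℝ)]

/-- If `v k` is rational then every element of the tangent space vanishes at `k`. -/
lemma LZ.rat_coord_zero (h : ℕ) (v : Fin h → ℝ) (a : Fin h → ℝ)
    (ha : a ∈ tangentSet h v) (k : Fin h) (hk : ¬ Irrational (v k)) : a k = 0 := by
  by_contra hak
  rw [Irrational, not_not] at hk
  obtain ⟨q, hq⟩ := hk
  have hden : (0:ℝ) < q.den := by positivity
  set C : Set (Fin h → AddCircle (1:ℝ)) := { f | (q.den : ℕ) • (f k) = 0 } with hC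
  have hCclosed : IsClosed C := by
    have : Continuous fun f : Fin h → AddCircle (1:ℝ) => (q.den : ℕ) • (f k) :=
      (continuous_apply k).nsmul q.den
    exact isClosed_eq this continuous_const
  have hSC : { x | ∃ m : ℕ, 1 ≤ m ∧ x = torusProj h (fun i => (m : ℝ) * v i) } ⊆ C := by
    rintro x ⟨m, hm, rfl⟩
    show (q.den : ℕ) • (((m : ℝ) * v k : ℝ) : AddCircle (1:ℝ)) = 0
    rw [← AddCircle.coe_nsmul, AddCircle.coe_eq_zero_iff]
    refine ⟨(m : ℤ) * q.num, ?_⟩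
    have : ((m:ℝ) * q.num : ℝ) = q.den • ((m:ℝ) * v k) := by
      rw [← hq, nsmul_eq_mul]
      have hnum : (q.num : ℝ) = (q:ℝ) * q.den := by exact_mod_cast (Rat.mul_den_eq_num q).symm
      rw [hnum]; ring
    rw [zsmul_eq_mul]
    push_cast
    rw [this, nsmul_eq_mul]
    ring
  have hHC : multClosure h v ⊆ C := closure_minimal hSC hCclosed
  set t : ℝ := 1 / (2 * q.den * a k) with ht
  have hmem := hHC (ha t)
  have hkey : (q.den : ℕ) • ((t * a k : ℝ) : AddCircle (1:ℝ)) = 0 := by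
    have h2 : torusProj h (t • a) k = ((t * a k : ℝ) : AddCircle (1:ℝ)) := by
      simp [torusProj, Pi.smul_apply, smul_eq_mul]
    rw [← h2]; exact hmem
  rw [← AddCircle.coe_nsmul, AddCircle.coe_eq_zero_iff] at hkey
  obtain ⟨n, hn⟩ := hkey
  have hval : (q.den : ℕ) • (t * a k) = 1/2 := by
    rw [nsmul_eq_mul, ht]
    field_simp
  rw [hval, zsmul_eq_mul, mul_one] at hn
  have h2n : (2 * n : ℤ) = 1 := by
    have : (2:ℝ) * n = 1 := by rw [hn]; norm_num
    exact_mod_cast this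
  omega

/-- The Long–Zhu approximation theorem: for every `a ∈ A(v)` and every `ε > 0` there
are infinitely many `T ∈ ℕ` with `|{T v_k} − ψ(a_k)| < ε` for every `k`. -/
theorem longZhu_vertex_approximation (h : ℕ) (hh : 1 ≤ h) (v : Fin h → ℝ)
    (a : Fin h → ℝ) (ha : a ∈ admissibleSet h v) (ε : ℝ) (hε : 0 < ε) :
    { T : ℕ | ∀ k : Fin h, |Int.fract ((T : ℝ) * v k) - psiFn (a k)| < ε }.Infinite := by
  obtain ⟨ha1, ha2⟩ := ha
  have k0 : Fin h := ⟨0, hh⟩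
  set ε₀ : ℝ := min (ε/3) (1/3) with hε₀def
  have hε₀ : 0 < ε₀ := lt_min (by linarith) (by norm_num)
  have hε₀a : ε₀ ≤ ε/3 := min_le_left _ _
  have hε₀b : ε₀ ≤ 1/3 := min_le_right _ _
  have hε₀ε : 2*ε₀ < ε := by linarith
  have hε₀1 : 2*ε₀ < 1 := by linarith
  -- choice of δ
  have hne : (Finset.univ : Finset (Fin h)).Nonempty := ⟨k0, Finset.mem_univ _⟩
  set M : ℝ := Finset.univ.sup' hne (fun k => |a k|) with hMdef
  have hM : 0 ≤ M := le_trans (abs_nonneg (a k0)) (Finset.le_sup' (fun k => |a k|) (Finset.mem_univ k0))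
  set δ : ℝ := ε₀ / (M + 1) with hδdef
  have hδ : 0 < δ := by positivity
  have hδa : ∀ k : Fin h, δ * |a k| ≤ ε₀ := by
    intro k
    have h1 : |a k| ≤ M := Finset.le_sup' (fun k => |a k|) (Finset.mem_univ k)
    have h2 : δ * |a k| ≤ δ * (M+1) := by nlinarith
    have h3 : δ * (M+1) = ε₀ := by
      rw [hδdef]; field_simp
    linarith
  -- per-coordinate claims
  have key : ∀ k : Fin h, ∃ η : ℝ, 0 < η ∧ ∀ T : ℕ,
      ‖(((T:ℝ) * v k : ℝ) : AddCircle (1:ℝ)) - ((δ * a k : ℝ) : AddCircle (1:ℝ))‖ < η →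
      |Int.fract ((T:ℝ) * v k) - psiFn (a k)| < ε := by
    intro k
    by_cases hk : Irrational (v k)
    · have hak := ha2 k hk
      have haka : 0 < |a k| := abs_pos.mpr hak
      refine ⟨δ * |a k|, by positivity, fun T hT => ?_⟩
      rw [← AddCircle.coe_sub, LZ.norm_coe_one] at hT
      set x : ℝ := (T:ℝ) * v k with hx
      set n : ℤ := round (x - δ * a k) with hn
      rw [abs_lt] at hT
      rcases lt_or_ge (a k) 0 with hneg | hpos
      · have habs : |a k| = -(a k) := abs_of_neg hneg
        have hδak := hδa k
        rw [habs] at hT hδak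
        have hb1 : x - n < 0 := by linarith [hT.2]
        have hb2 : -(2*ε₀) < x - n := by linarith [hT.1]
        have hfr : Int.fract x = x - n + 1 := by
          have e1 : Int.fract x = Int.fract (x - n) := (Int.fract_sub_intCast x n).symm
          have e2 : Int.fract (x - n + 1) = Int.fract (x - n) := Int.fract_add_one _
          rw [e1, ← e2, Int.fract_eq_self.mpr ⟨by linarith, by linarith⟩]
        have hpsi : psiFn (a k) = 1 := by simp [psiFn, not_le.mpr hneg]
        rw [hfr, hpsi]
        rw [abs_lt]
        constructor <;> linarith
      · have hpos' : 0 < a k := lt_of_le_of_ne hpos (Ne.symm hak)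
        have habs : |a k| = a k := abs_of_pos hpos'
        have hδak := hδa k
        rw [habs] at hT hδak
        have hb1 : 0 < x - n := by linarith [hT.1]
        have hb2 : x - n < 2*ε₀ := by linarith [hT.2]
        have hfr : Int.fract x = x - n := by
          have e1 : Int.fract x = Int.fract (x - n) := (Int.fract_sub_intCast x n).symm
          rw [e1, Int.fract_eq_self.mpr ⟨by linarith, by linarith⟩]
        have hpsi : psiFn (a k) = 0 := by simp [psiFn, hpos]
        rw [hfr, hpsi]
        rw [abs_lt]
        constructor <;> linarith
    · have hak : a k = 0 := LZ.rat_coord_zero h v a ha1 k hk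
      rw [Irrational, not_not] at hk
      obtain ⟨q, hq⟩ := hk
      have hden : (0:ℝ) < q.den := by positivity
      refine ⟨1/(2*q.den), by positivity, fun T hT => ?_⟩
      rw [hak] at hT ⊢
      rw [mul_zero] at hT
      have hz : ((0:ℝ) : AddCircle (1:ℝ)) = 0 := by norm_num
      rw [hz, sub_zero, LZ.norm_coe_one] at hT
      set x : ℝ := (T:ℝ) * v k with hx
      set n : ℤ := round x with hn
      have hxq : x * q.den = (T:ℝ) * (q.num:ℝ) := by
        have hnum : (q.num : ℝ) = (q:ℝ) * q.den := by exact_mod_cast (Rat.mul_den_eq_num q).symm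
        rw [hx, ← hq, hnum]
        ring
      have h5 : |x * q.den - n * q.den| < 1/2 := by
        have he : |x * q.den - n * q.den| = |x - n| * q.den := by
          rw [← sub_mul, abs_mul, abs_of_pos hden]
        rw [he]
        calc |x - n| * q.den < (1/(2*q.den)) * q.den := by
              apply mul_lt_mul_of_pos_right hT hden
          _ = 1/2 := by field_simp
      set z : ℤ := (T:ℤ) * q.num - n * q.den with hzdef
      have hcast : |(z:ℝ)| < 1/2 := by
        rw [hzdef]
        push_cast
        rw [← hxq]
        exact h5
      have h6 : z = 0 := by
        by_contra hz0
        have h1z : (1:ℤ) ≤ |z| := Int.one_le_abs (by omega)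
        have h1r : (1:ℝ) ≤ |(z:ℝ)| := by exact_mod_cast h1z
        linarith
      have hxn : x = n := by
        have he : x * q.den = n * q.den := by
          have : ((T:ℤ) * q.num : ℤ) = (n * q.den : ℤ) := by omega
          have hcv : (T:ℝ) * (q.num:ℝ) = (n:ℝ) * (q.den:ℝ) := by exact_mod_cast this
          rw [hxq, hcv]
        exact mul_right_cancel₀ (ne_of_gt hden) he
      have hfr : Int.fract x = 0 := by rw [hxn, Int.fract_intCast]
      have hpsi : psiFn (0:ℝ) = 0 := by simp [psiFn]
      rw [hfr, hpsi, sub_zero, abs_zero]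
      exact hε
  choose ηf hηf0 hηf using key
  set η : ℝ := Finset.univ.inf' hne ηf with hηdef
  have hη : 0 < η := by
    rw [hηdef, Finset.lt_inf'_iff]
    exact fun k _ => hηf0 k
  apply Set.infinite_of_not_bddAbove
  rintro ⟨N, hN⟩
  -- find m with π(m v) close to π(δ a)
  obtain ⟨m, hm1, hm2⟩ : ∃ m : ℕ, 1 ≤ m ∧ ∀ k : Fin h,
      ‖(((m:ℝ) * v k : ℝ) : AddCircle (1:ℝ)) - ((δ * a k : ℝ) : AddCircle (1:ℝ))‖ < η/2 := by
    have hmem := ha1 δ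
    rw [multClosure, Metric.mem_closure_iff] at hmem
    obtain ⟨b, hbS, hdist⟩ := hmem (η/2) (by positivity)
    obtain ⟨m, hm, rfl⟩ := hbS
    refine ⟨m, hm, fun k => ?_⟩
    have hle := dist_le_pi_dist (torusProj h (δ • a))
      (torusProj h (fun i => (m:ℝ) * v i)) k
    have hco1 : torusProj h (δ • a) k = ((δ * a k : ℝ) : AddCircle (1:ℝ)) := by
      simp [torusProj, Pi.smul_apply, smul_eq_mul]
    have hco2 : torusProj h (fun i => (m:ℝ) * v i) k = (((m:ℝ) * v k : ℝ) : AddCircle (1:ℝ)) := by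
      simp [torusProj]
    rw [hco1, hco2, dist_eq_norm] at hle
    rw [← norm_neg]
    simp only [neg_sub]
    exact lt_of_le_of_lt hle hdist
  -- find r ≥ 1 with π(r (N+1) v) close to 0
  obtain ⟨r, hr1, hr2⟩ := LZ.recurrence h (fun k => (((N:ℝ)+1)) * v k) (half_pos hη)
  set T : ℕ := m + r * (N+1) with hT
  have hTN : N < T := by
    have : N + 1 ≤ r * (N+1) := Nat.le_mul_of_pos_left _ hr1
    omega
  have hTmem : T ∈ { T : ℕ | ∀ k : Fin h, |Int.fract ((T : ℝ) * v k) - psiFn (a k)| < ε } := by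
    intro k
    apply hηf k
    refine lt_of_lt_of_le ?_ (by
      rw [hηdef] at hη ⊢
      exact Finset.inf'_le _ (Finset.mem_univ k) : η ≤ ηf k)
    have hsum : ((T:ℝ) * v k : ℝ) = ((m:ℝ) * v k) + ((r:ℝ) * ((((N:ℝ)+1)) * v k)) := by
      rw [hT]
      push_cast
      ring
    have hsplit : (((T:ℝ) * v k : ℝ) : AddCircle (1:ℝ)) - ((δ * a k : ℝ) : AddCircle (1:ℝ))
        = ((((m:ℝ) * v k : ℝ) : AddCircle (1:ℝ)) - ((δ * a k : ℝ) : AddCircle (1:ℝ)))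
          + (((r:ℝ) * ((((N:ℝ)+1)) * v k) : ℝ) : AddCircle (1:ℝ)) := by
      rw [hsum, AddCircle.coe_add]
      abel
    rw [hsplit]
    calc ‖_ + _‖ ≤ ‖_‖ + ‖_‖ := norm_add_le _ _
      _ < η/2 + η/2 := add_lt_add (hm2 k) (hr2 k)
      _ = η := add_halves η
  exact absurd (hN hTmem) (by omega)
end
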